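/- Let φ : A → A^k be a substitution of constant length k ≥ 2 over a finite alphabet A. The following are equivalent: (i) the incidence matrix of the discrepancy substitution φ_s is nilpotent; (ii) there exists n ∈ ℕ such that (φ_s)^n(α) is the empty word for every unordered pair α of distinct letters; (iii) there exists n ∈ ℕ such that the words φ^n(a), a ∈ A, are all equal. -/

import Mathlib

variable {A : Type*}

/-- A substitution `φ : A → A^*` extended to finite words by concatenation. -/
def subExt (φ : A → List A) (w : List A) : List A := w.flatMap φ

/-- Composition of substitutions: `(φ ∘ τ)(a) = φ(τ(a))`. -/
def subComp (φ τ : A → List A) : A → List A := fun a => subExt φ (τ a)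

/-- The `n`-th power `φ^n` of a substitution. -/
def subPow (φ : A → List A) : ℕ → A → List A
  | 0 => fun a => [a]
  | n + 1 => subComp φ (subPow φ n)

/-- The discrepancy substitution `φ_s` of `φ`, defined on unordered pairs of letters:
`φ_s({a,b})` is the word, over the alphabet of unordered pairs, obtained by concatenating
the pairs `{φ(a)_i, φ(b)_i}` over those positions `i` where `φ(a)_i ≠ φ(b)_i`. -/
def discrep [DecidableEq A] (φ : A → List A) : Sym2 A → List (Sym2 A) :=
  Sym2.lift ⟨fun a b => ((φ a).zip (φ b)).filterMap
      (fun p => if p.1 ≠ p.2 then some (Sym2.mk p.1 p.2) else none),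
    by
      intro a b
      show List.filterMap _ ((φ a).zip (φ b)) = List.filterMap _ ((φ b).zip (φ a))
      rw [← List.zip_swap (φ a) (φ b), List.filterMap_map]
      congr 1
      funext p
      obtain ⟨x, y⟩ := p
      by_cases h : x = y
      · simp [h]
      · simp only [Function.comp_apply, Prod.swap_prod_mk]
        rw [if_pos (by simp [h]), if_pos (by simp [Ne.symm h])]
        all_goals exact congrArg some Sym2.eq_swap⟩

/-- The alphabet of the discrepancy substitution: unordered pairs of *distinct* letters. -/
abbrev PairAlphabet (A : Type*) := {α : Sym2 A // ¬ α.IsDiag}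

/-- The incidence matrix of the discrepancy substitution `φ_s`: the `(α, β)` entry is the
number of occurrences of the letter `α` in the word `φ_s(β)`. -/
def discrepMatrix [DecidableEq A] (φ : A → List A) :
    Matrix (PairAlphabet A) (PairAlphabet A) ℕ :=
  fun α β => (discrep φ β.1).count α.1

/-!
Write `φ_s` for `discrep φ`. Comparing `φ^n(a)` and `φ^n(b)` letter by letter, constant length
keeps the blocks `φ(x)`, `φ(y)` of aligned letters aligned, so the discrepancies of
`φ^(n+1)(a), φ^(n+1)(b)` are exactly the `φ_s`-images of those of `φ^n(a), φ^n(b)`. Hence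
`φ_s^n({a, b})` lists the mismatched positions of `φ^n(a)` and `φ^n(b)`, and it is empty iff
the two words agree. On the other side, the `(α, β)` entry of the `n`-th power of the incidence
matrix counts the letter `α` in `φ_s^n(β)`, and `φ_s` never produces a diagonal pair, so the
matrix is nilpotent iff some power of `φ_s` erases every letter.
-/

variable {B : Type*}

section Substitution

lemma subPow_succ (ψ : B → List B) (n : ℕ) (b : B) :
    subPow ψ (n + 1) b = (subPow ψ n b).flatMap ψ := rfl

lemma length_subExt {ψ : B → List B} {k : ℕ} (hψ : ∀ b, (ψ b).length = k) (w : List B) :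
    (subExt ψ w).length = k * w.length := by
  simp [subExt, List.length_flatMap, hψ, mul_comm]

lemma length_subPow {ψ : B → List B} {k : ℕ} (hψ : ∀ b, (ψ b).length = k) (n : ℕ) (b : B) :
    (subPow ψ n b).length = k ^ n := by
  induction n with
  | zero => rfl
  | succ n ih => rw [subPow_succ, ← subExt, length_subExt hψ, ih, pow_succ']

lemma forall_mem_subPow {ψ : B → List B} {p : B → Prop} (hp : ∀ b, p b → ∀ c ∈ ψ b, p c)
    {b : B} (hb : p b) (n : ℕ) : ∀ c ∈ subPow ψ n b, p c := by
  induction n with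
  | zero => simpa [subPow] using hb
  | succ n ih =>
    simp only [subPow_succ, List.mem_flatMap, forall_exists_index, and_imp]
    exact fun c d hd hc => hp d (ih d hd) c hc

lemma sum_map_eq_sum_count_nsmul {ι M : Type*} [Fintype ι] [BEq ι] [LawfulBEq ι]
    [AddCommMonoid M] (w : List ι) (g : ι → M) : (w.map g).sum = ∑ i, w.count i • g i := by
  classical
  induction w with
  | nil => simp
  | cons c w ih => simp [List.count_cons, add_smul, Finset.sum_add_distrib, ih, add_comm]

variable [DecidableEq B]

def incidenceMatrix (ψ : B → List B) (p : B → Prop) : Matrix (Subtype p) (Subtype p) ℕ :=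
  Matrix.of fun α β => (ψ β.1).count α.1

variable {ψ : B → List B} {p : B → Prop} [Fintype (Subtype p)]

lemma incidenceMatrix_pow_apply (hp : ∀ b, p b → ∀ c ∈ ψ b, p c) (n : ℕ) (α β : Subtype p) :
    (incidenceMatrix ψ p ^ n) α β = (subPow ψ n β.1).count α.1 := by
  induction n generalizing α β with
  | zero =>
    rw [pow_zero, Matrix.one_apply, subPow, List.count_singleton']
    exact if_congr (Subtype.ext_iff.trans eq_comm) rfl rfl
  | succ n ih =>
    obtain ⟨w, hw⟩ : ∃ w : List (Subtype p), w.map Subtype.val = subPow ψ n β.1 :=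
      ⟨_, List.attachWith_map_subtype_val (forall_mem_subPow hp β.2 n)⟩
    simp only [pow_succ', Matrix.mul_apply, ih, subPow_succ, ← hw, List.count_flatMap,
      List.map_map, sum_map_eq_sum_count_nsmul,
      List.count_map_of_injective _ _ Subtype.val_injective]
    exact Finset.sum_congr rfl fun _ _ => mul_comm _ _

lemma isNilpotent_incidenceMatrix_iff (hp : ∀ b, p b → ∀ c ∈ ψ b, p c) :
    IsNilpotent (incidenceMatrix ψ p) ↔ ∃ n, ∀ b, p b → subPow ψ n b = [] := by
  refine exists_congr fun n => ?_
  simp only [← Matrix.ext_iff, incidenceMatrix_pow_apply hp, Matrix.zero_apply,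
    List.count_eq_zero]
  constructor
  · intro h b hb
    exact List.eq_nil_iff_forall_not_mem.mpr fun c hc =>
      h ⟨c, forall_mem_subPow hp hb n c hc⟩ ⟨b, hb⟩ hc
  · intro h α β
    simp [h β.1 β.2]

end Substitution

section Discrepancy

variable [DecidableEq A]

def discrepWord (u v : List A) : List (Sym2 A) :=
  (u.zip v).filterMap fun p => if p.1 ≠ p.2 then some (Sym2.mk p.1 p.2) else none

lemma discrep_mk (φ : A → List A) (a b : A) : discrep φ s(a, b) = discrepWord (φ a) (φ b) :=
  rfl

lemma discrepWord_cons_cons (a b : A) (u v : List A) :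
    discrepWord (a :: u) (b :: v) = (if a = b then [] else [s(a, b)]) ++ discrepWord u v := by
  by_cases h : a = b <;> simp [discrepWord, h]

lemma discrepWord_self (w : List A) : discrepWord w w = [] := by
  induction w with
  | nil => rfl
  | cons a w ih => simp [discrepWord_cons_cons, ih]

lemma discrepWord_eq_nil_iff {u v : List A} (h : u.length = v.length) :
    discrepWord u v = [] ↔ u = v := by
  refine ⟨fun huv => ?_, fun huv => huv ▸ discrepWord_self u⟩
  induction u generalizing v with
  | nil => exact (List.length_eq_zero_iff.mp h.symm).symm
  | cons a u ih =>
    obtain _ | ⟨b, v⟩ := v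
    · simp at h
    · by_cases hab : a = b
      · simp only [discrepWord_cons_cons, hab, if_true, List.nil_append] at huv
        rw [hab, ih (by simpa using h) huv]
      · simp [discrepWord_cons_cons, hab] at huv

lemma discrepWord_append {u u' : List A} (h : u.length = u'.length) (v v' : List A) :
    discrepWord (u ++ v) (u' ++ v') = discrepWord u u' ++ discrepWord v v' := by
  rw [discrepWord, List.zip_append h, List.filterMap_append]
  rfl

lemma not_isDiag_of_mem_discrep {φ : A → List A} {α γ : Sym2 A} (h : γ ∈ discrep φ α) :
    ¬ γ.IsDiag := by
  induction α using Sym2.ind with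
  | _ a b =>
    obtain ⟨⟨x, y⟩, -, hxy⟩ := List.mem_filterMap.mp h
    by_cases hx : x = y
    · simp [hx] at hxy
    · simp only [ne_eq, hx, not_false_eq_true, if_true, Option.some.injEq] at hxy
      rwa [← hxy, Sym2.mk_isDiag_iff]

lemma discrepMatrix_eq_incidenceMatrix (φ : A → List A) :
    discrepMatrix φ = incidenceMatrix (discrep φ) (¬ ·.IsDiag) :=
  rfl

variable {φ : A → List A} {k : ℕ}

lemma discrepWord_subExt (hφ : ∀ a, (φ a).length = k) {u v : List A}
    (h : u.length = v.length) :
    discrepWord (subExt φ u) (subExt φ v) = subExt (discrep φ) (discrepWord u v) := by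
  induction u generalizing v with
  | nil => rw [List.length_eq_zero_iff.mp h.symm]; rfl
  | cons a u ih =>
    obtain _ | ⟨b, v⟩ := v
    · simp at h
    · simp only [subExt, List.flatMap_cons] at ih ⊢
      rw [discrepWord_append (by rw [hφ, hφ]), ih (by simpa using h), discrepWord_cons_cons,
        List.flatMap_append]
      by_cases hab : a = b
      · simp [hab, discrepWord_self]
      · simp [hab, discrep_mk]

lemma subPow_discrep_mk (hφ : ∀ a, (φ a).length = k) (n : ℕ) {a b : A} (hab : a ≠ b) :
    subPow (discrep φ) n s(a, b) = discrepWord (subPow φ n a) (subPow φ n b) := by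
  induction n with
  | zero => simp [subPow, discrepWord, hab]
  | succ n ih =>
    rw [subPow_succ, ih, ← subExt,
      ← discrepWord_subExt hφ (by rw [length_subPow hφ, length_subPow hφ])]
    rfl

lemma subPow_discrep_eq_nil_iff (hφ : ∀ a, (φ a).length = k) (n : ℕ) :
    (∀ α : Sym2 A, ¬ α.IsDiag → subPow (discrep φ) n α = []) ↔
      ∀ a b : A, subPow φ n a = subPow φ n b := by
  have key {a b : A} (hab : a ≠ b) :
      subPow (discrep φ) n s(a, b) = [] ↔ subPow φ n a = subPow φ n b := by
    rw [subPow_discrep_mk hφ n hab,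
      discrepWord_eq_nil_iff (by rw [length_subPow hφ, length_subPow hφ])]
  constructor
  · intro h a b
    by_cases hab : a = b
    · rw [hab]
    · exact (key hab).mp (h _ (by rwa [Sym2.mk_isDiag_iff]))
  · intro h α hα
    induction α using Sym2.ind with
    | _ a b => exact (key (by rwa [Sym2.mk_isDiag_iff] at hα)).mpr (h a b)

end Discrepancy

theorem stmt6_general [DecidableEq A] [Fintype A] (k : ℕ) (φ : A → List A)
    (hφ : ∀ a, (φ a).length = k) :
    (IsNilpotent (discrepMatrix φ) ↔
      ∃ n : ℕ, ∀ α : Sym2 A, ¬ α.IsDiag → subPow (discrep φ) n α = []) ∧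
    ((∃ n : ℕ, ∀ α : Sym2 A, ¬ α.IsDiag → subPow (discrep φ) n α = []) ↔
      ∃ n : ℕ, ∀ a b : A, subPow φ n a = subPow φ n b) := by
  constructor
  · rw [discrepMatrix_eq_incidenceMatrix]
    exact isNilpotent_incidenceMatrix_iff fun _ _ _ => not_isDiag_of_mem_discrep
  · exact exists_congr (subPow_discrep_eq_nil_iff hφ)

/-- For a substitution `φ` of constant length `k ≥ 2` over a finite
alphabet the following are equivalent: (i) the incidence matrix of `φ_s` is nilpotent;
(ii) there is `n` with `(φ_s)^n(α)` empty for every unordered pair `α` of distinct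
letters; (iii) there is `n` such that all the words `φ^n(a)`, `a ∈ A`, coincide. -/
theorem stmt6 [DecidableEq A] [Fintype A] (k : ℕ) (hk : 2 ≤ k) (φ : A → List A)
    (hφ : ∀ a, (φ a).length = k) :
    (IsNilpotent (discrepMatrix φ) ↔
      ∃ n : ℕ, ∀ α : Sym2 A, ¬ α.IsDiag → subPow (discrep φ) n α = []) ∧
    ((∃ n : ℕ, ∀ α : Sym2 A, ¬ α.IsDiag → subPow (discrep φ) n α = []) ↔
      ∃ n : ℕ, ∀ a b : A, subPow φ n a = subPow φ n b) :=
  stmt6_general k φ hφ
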